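/- On the equatorial hypersphere M₀ = S⁶ ∩ {x₇ = 0}, the almost contact metric structure (φ', ξ, η, g), defined by φ'ξ = 0 and φ'X = -ν × X for X ⊥ ξ, satisfies dη(X,Y) = g(X, φ'Y) for all tangent vectors X, Y; i.e., (M₀, φ', ξ, η, g) is a contact metric manifold. -/

import Mathlib

/- Common setup: ℝ⁷ ≅ pure imaginary octonions 𝔆₊ (0-based indices: eᵢ ↦ i-1),
   octonion cross product x × y = xy + ⟨x,y⟩·1 given by the Fano triples
   (e₁e₂=e₃, e₁e₄=e₅, e₁e₆=e₇, e₂e₅=e₇, e₃e₄=e₇, e₃e₅=e₆, e₂e₆=e₄),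
   the hypersurfaces M_r = S⁶ ∩ {x₇ = r}, the unit normal ν of M_r in S⁶,
   the vector field ξ = -N × ν, its dual 1-form η and dη
   (with the convention dη(X,Y) = ½(Xη(Y) - Yη(X) - η([X,Y]))). -/

noncomputable section

open scoped RealInnerProductSpace

abbrev E7 : Type := EuclideanSpace ℝ (Fin 7)
abbrev E6 : Type := EuclideanSpace ℝ (Fin 6)

/-- Octonion cross product on pure imaginary octonions 𝔆₊ ≅ ℝ⁷. -/
def cross (u v : E7) : E7 := WithLp.toLp 2 fun (k : Fin 7) =>
  if k = 0 then u 1 * v 2 - u 2 * v 1 + (u 3 * v 4 - u 4 * v 3) + (u 5 * v 6 - u 6 * v 5)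
  else if k = 1 then u 2 * v 0 - u 0 * v 2 + (u 4 * v 6 - u 6 * v 4) + (u 5 * v 3 - u 3 * v 5)
  else if k = 2 then u 0 * v 1 - u 1 * v 0 + (u 3 * v 6 - u 6 * v 3) + (u 4 * v 5 - u 5 * v 4)
  else if k = 3 then u 4 * v 0 - u 0 * v 4 + (u 6 * v 2 - u 2 * v 6) + (u 1 * v 5 - u 5 * v 1)
  else if k = 4 then u 0 * v 3 - u 3 * v 0 + (u 6 * v 1 - u 1 * v 6) + (u 5 * v 2 - u 2 * v 5)
  else if k = 5 then u 6 * v 0 - u 0 * v 6 + (u 2 * v 4 - u 4 * v 2) + (u 3 * v 1 - u 1 * v 3)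
  else u 0 * v 5 - u 5 * v 0 + (u 1 * v 4 - u 4 * v 1) + (u 2 * v 3 - u 3 * v 2)

/-- The hypersurface M_r = S⁶ ∩ {x₇ = r} = {Σᵢ₌₁⁶ xᵢeᵢ + re₇ : Σᵢ₌₁⁶ xᵢ² = 1 - r²}. -/
def Mr (r : ℝ) : Set E7 := {x | x 6 = r ∧ ∑ i : Fin 6, x i.castSucc ^ 2 = 1 - r ^ 2}

/-- The unit normal ν of M_r in S⁶ : ν_x = (r/√(1-r²)) Σᵢ₌₁⁶ xᵢeᵢ - √(1-r²) e₇. -/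
def nu (r : ℝ) (x : E7) : E7 := WithLp.toLp 2 fun (i : Fin 7) =>
  if i = 6 then -Real.sqrt (1 - r ^ 2) else (r / Real.sqrt (1 - r ^ 2)) * x i

/-- ξ = -N × ν = (1/√(1-r²))(x₆e₁ + x₅e₂ + x₄e₃ - x₃e₄ - x₂e₅ - x₁e₆). -/
def xi (r : ℝ) (x : E7) : E7 := WithLp.toLp 2 fun (i : Fin 7) =>
  (1 / Real.sqrt (1 - r ^ 2)) *
    (if i = 0 then x 5 else if i = 1 then x 4 else if i = 2 then x 3
     else if i = 3 then -x 2 else if i = 4 then -x 1 else if i = 5 then -x 0 else 0)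

/-- The 1-form η dual to ξ:
η = (1/√(1-r²))(x₆dx₁ + x₅dx₂ + x₄dx₃ - x₃dx₄ - x₂dx₅ - x₁dx₆). -/
def eta (r : ℝ) (x v : E7) : ℝ :=
  (1 / Real.sqrt (1 - r ^ 2)) *
    (x 5 * v 0 + x 4 * v 1 + x 3 * v 2 - x 2 * v 3 - x 1 * v 4 - x 0 * v 5)

/-- dη = -(2/√(1-r²))(dx₁∧dx₆ + dx₂∧dx₅ + dx₃∧dx₄), with the convention
dη(X,Y) = ½(Xη(Y) - Yη(X) - η([X,Y])), i.e. (dxᵢ∧dxⱼ)(u,v) = ½(uᵢvⱼ - uⱼvᵢ). -/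
def deta (r : ℝ) (u v : E7) : ℝ :=
  -(1 / Real.sqrt (1 - r ^ 2)) *
    (u 0 * v 5 - u 5 * v 0 + (u 1 * v 4 - u 4 * v 1) + (u 2 * v 3 - u 3 * v 2))

/-- The tangent space T_xM_r = {v : v₇ = 0, ⟨v,x⟩ = 0} (as a predicate). -/
def TangentMr (x v : E7) : Prop := v 6 = 0 ∧ ⟪v, x⟫ = 0

/-- The structure tensor φ' on M_r: φ'ξ = 0 and φ'X = -ν × X for X ⊥ ξ;
equivalently φ'X = -ν × (X - η(X)ξ). -/
def phi' (r : ℝ) (x v : E7) : E7 := -cross (nu r x) (v - eta r x v • xi r x)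

/-! At `r = 0` the normal `ν` is the constant `-e₇`, so `φ'Y = J(Y - η(Y)ξ)` with `J = e₇ × ·`,
the standard complex structure on `e₇^⊥`. Both `dη` and `g(·, J·)` are the Kähler form of `J`,
and `Jξ` is the position vector `x`, normal to `M₀`; so the correction `η(Y)ξ` is invisible to
a tangent `X`. -/

abbrev e7 : E7 := EuclideanSpace.single 6 1

lemma cross_neg_left (u v : E7) : cross (-u) v = -cross u v := by
  ext k; fin_cases k <;> simp [cross] <;> ring

lemma cross_sub_right (u v w : E7) : cross u (v - w) = cross u v - cross u w := by
  ext k; fin_cases k <;> simp [cross] <;> ring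

lemma cross_smul_right (a : ℝ) (u v : E7) : cross u (a • v) = a • cross u v := by
  ext k; fin_cases k <;> simp [cross] <;> ring

lemma nu_zero (x : E7) : nu 0 x = -e7 := by
  ext k; fin_cases k <;> simp [nu]

lemma deta_eq_inner_cross (r : ℝ) (u v : E7) :
    deta r u v = (1 / Real.sqrt (1 - r ^ 2)) * ⟪u, cross e7 v⟫ := by
  simp [deta, cross, PiLp.inner_apply, Fin.sum_univ_seven]
  ring

lemma cross_e7_xi (r : ℝ) (x : E7) :
    cross e7 (xi r x) = (1 / Real.sqrt (1 - r ^ 2)) • (x - x 6 • e7) := by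
  ext k; fin_cases k <;> simp [cross, xi]

lemma phi'_zero (x v : E7) : phi' 0 x v = cross e7 v - eta 0 x v • (x - x 6 • e7) := by
  rw [phi', nu_zero, cross_neg_left, neg_neg, cross_sub_right, cross_smul_right, cross_e7_xi]
  norm_num

theorem stmt17_general (x : E7) (u v : E7)
    (hu : TangentMr x u) :
    deta 0 u v = ⟪u, phi' 0 x v⟫ := by
  obtain ⟨hu6, hux⟩ := hu
  have hu_perp : ⟪u, x - x 6 • e7⟫ = 0 := by
    simp [inner_sub_right, inner_smul_right, EuclideanSpace.inner_single_right, hux, hu6]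
  rw [phi'_zero, inner_sub_right, inner_smul_right, hu_perp, deta_eq_inner_cross]
  simp

/-- on the equatorial hypersphere M₀ = S⁶ ∩ {x₇ = 0}, the
almost contact metric structure (φ', ξ, η, g) satisfies dη(X,Y) = g(X, φ'Y)
for all tangent vectors; i.e. (M₀, φ', ξ, η, g) is a contact metric
manifold. -/
theorem stmt17 (x : E7) (hx : x ∈ Mr 0) (u v : E7)
    (hu : TangentMr x u) (hv : TangentMr x v) :
    deta 0 u v = ⟪u, phi' 0 x v⟫ :=
  stmt17_general x u v hu
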